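/- Let φ : ℝ → ℂ² be a differentiable curve of unit spinors (conj(φ(s))ᵗφ(s) = 1 for all s), let κ, τ : ℝ → ℝ be functions, and define T, N, B : ℝ → ℝ³ by N(s) + iB(s) = φ(s)ᵗσφ(s) and T(s) = −φ̂(s)ᵗσφ(s). Then the Frenet equations of an arc-length curve in the Lie group SO(3) (where τ_G = 1/2), namely T′ = κN, N′ = −κT + (τ − 1/2)B, B′ = −(τ − 1/2)N, hold for all s if and only if φ′(s) = −i((τ(s) − 1/2)/2)·φ(s) + (κ(s)/2)·φ̂(s) for all s. -/

import Mathlib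

/-!
Write `Q(φ, ψ) = φᵗσψ`, a symmetric ℂ-bilinear form, and `w = τ - 1/2`. Then `N + iB = Q(φ, φ)`,
`T = -Q(φ̂, φ)`, hence `(N + iB)' = 2 Q(φ, φ')`, while the proposed right-hand side
`V = -i(w/2)φ + (κ/2)φ̂` satisfies `2 Q(φ, V) = -iw(N + iB) - κT`. So the normal and binormal
equations together say exactly `Q(φ, φ') = Q(φ, V)`, and `Q(φ, ·)` is injective for `φ ≠ 0`.
The tangent equation is then automatic: since `φ̂̂ = -φ` and `Q(φ̂, φ̂) = -conj Q(φ, φ)`,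
`T' = -Q(V̂, φ) - Q(φ̂, V) = (κ/2)(Q(φ, φ) + conj Q(φ, φ)) = κN`.
-/

open Complex ComplexConjugate

section ProdDeriv

variable {𝕜 E F : Type*} [NontriviallyNormedField 𝕜] [NormedAddCommGroup E] [NormedSpace 𝕜 E]
  [NormedAddCommGroup F] [NormedSpace 𝕜 F] {f : 𝕜 → E × F} {f' : E × F} {x : 𝕜}

lemma HasDerivAt.fst (h : HasDerivAt f f' x) : HasDerivAt (fun t => (f t).1) f'.1 x := by
  simpa using h.hasFDerivAt.fst.hasDerivAt

lemma HasDerivAt.snd (h : HasDerivAt f f' x) : HasDerivAt (fun t => (f t).2) f'.2 x := by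
  simpa using h.hasFDerivAt.snd.hasDerivAt

end ProdDeriv

lemma HasDerivAt.re {f : ℝ → ℂ} {f' : ℂ} {s : ℝ} (h : HasDerivAt f f' s) :
    HasDerivAt (fun t => (f t).re) f'.re s :=
  reCLM.hasFDerivAt.comp_hasDerivAt s h

lemma HasDerivAt.im {f : ℝ → ℂ} {f' : ℂ} {s : ℝ} (h : HasDerivAt f f' s) :
    HasDerivAt (fun t => (f t).im) f'.im s :=
  imCLM.hasFDerivAt.comp_hasDerivAt s h

/-- `spinorForm φ ψ = φᵗσψ` for the triple `σ = (σ₁, σ₂, σ₃)`. -/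
noncomputable def spinorForm : ℂ × ℂ →ₗ[ℂ] ℂ × ℂ →ₗ[ℂ] Fin 3 → ℂ :=
  LinearMap.mk₂ ℂ
    (fun φ ψ => ![φ.1 * ψ.1 - φ.2 * ψ.2, I * (φ.1 * ψ.1 + φ.2 * ψ.2), -(φ.1 * ψ.2 + φ.2 * ψ.1)])
    (by intros; ext i; fin_cases i <;> simp <;> ring)
    (by intros; ext i; fin_cases i <;> simp <;> ring)
    (by intros; ext i; fin_cases i <;> simp <;> ring)
    (by intros; ext i; fin_cases i <;> simp <;> ring)

noncomputable def mate : ℂ × ℂ →ₗ⋆[ℂ] ℂ × ℂ where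
  toFun φ := (-conj φ.2, conj φ.1)
  map_add' φ ψ := by ext <;> simp [add_comm]
  map_smul' z φ := by ext <;> simp

noncomputable def spinorFrenetField (κ w : ℝ) (φ : ℂ × ℂ) : ℂ × ℂ :=
  (-I * ((w : ℂ) / 2)) • φ + ((κ : ℂ) / 2) • mate φ

lemma spinorForm_apply (φ ψ : ℂ × ℂ) : spinorForm φ ψ =
    ![φ.1 * ψ.1 - φ.2 * ψ.2, I * (φ.1 * ψ.1 + φ.2 * ψ.2), -(φ.1 * ψ.2 + φ.2 * ψ.1)] := rfl

lemma mate_apply (φ : ℂ × ℂ) : mate φ = (-conj φ.2, conj φ.1) := rfl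

lemma mate_mate (φ : ℂ × ℂ) : mate (mate φ) = -φ := by
  ext <;> simp [mate_apply]

lemma spinorForm_comm (φ ψ : ℂ × ℂ) : spinorForm φ ψ = spinorForm ψ φ := by
  ext i; fin_cases i <;> simp [spinorForm_apply] <;> ring

lemma spinorForm_self (φ : ℂ × ℂ) :
    spinorForm φ φ = ![φ.1 ^ 2 - φ.2 ^ 2, I * (φ.1 ^ 2 + φ.2 ^ 2), -2 * φ.1 * φ.2] := by
  ext i; fin_cases i <;> simp [spinorForm_apply] <;> ring

lemma neg_spinorForm_mate (φ : ℂ × ℂ) : -spinorForm (mate φ) φ =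
    ![φ.1 * conj φ.2 + conj φ.1 * φ.2, I * (conj φ.2 * φ.1 - conj φ.1 * φ.2),
      ((‖φ.1‖ ^ 2 - ‖φ.2‖ ^ 2 : ℝ) : ℂ)] := by
  ext i; fin_cases i <;> simp [spinorForm_apply, mate_apply, ← mul_conj'] <;> ring

lemma spinorForm_mate_mate (φ : ℂ × ℂ) (i : Fin 3) :
    spinorForm (mate φ) (mate φ) i = -conj (spinorForm φ φ i) := by
  fin_cases i <;> simp [spinorForm_apply, mate_apply, add_comm]

lemma spinorForm_injective {φ : ℂ × ℂ} (hφ : φ ≠ 0) : Function.Injective (spinorForm φ) := by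
  refine (injective_iff_map_eq_zero _).2 fun ψ h => ?_
  have h₀ := congrFun h 0
  have h₁ := congrFun h 1
  have h₂ := congrFun h 2
  simp only [spinorForm_apply, Matrix.cons_val, Pi.zero_apply, mul_eq_zero, I_ne_zero, false_or]
    at h₀ h₁ h₂
  have hx₁ : φ.1 * ψ.1 = 0 := by linear_combination (h₀ + h₁) / 2
  have hy₂ : φ.2 * ψ.2 = 0 := by linear_combination (h₁ - h₀) / 2
  have hx₂ : φ.2 ^ 2 * ψ.1 = 0 := by linear_combination -φ.2 * h₂ - φ.1 * hy₂
  have hy₁ : φ.1 ^ 2 * ψ.2 = 0 := by linear_combination -φ.1 * h₂ - φ.2 * hx₁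
  have hψ₁ : ψ.1 = 0 := by
    by_contra hψ₁
    exact hφ (Prod.ext (by simpa [hψ₁] using hx₁) (by simpa [hψ₁] using hx₂))
  have hψ₂ : ψ.2 = 0 := by
    by_contra hψ₂
    exact hφ (Prod.ext (by simpa [hψ₂] using hy₁) (by simpa [hψ₂] using hy₂))
  exact Prod.ext hψ₁ hψ₂

lemma two_mul_spinorForm_spinorFrenetField (κ w : ℝ) (φ : ℂ × ℂ) (i : Fin 3) :
    2 * spinorForm φ (spinorFrenetField κ w φ) i =
      -I * w * spinorForm φ φ i + κ * spinorForm (mate φ) φ i := by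
  simp [spinorFrenetField, spinorForm_comm φ (mate φ)]
  ring

lemma spinorForm_mate_spinorFrenetField (κ w : ℝ) (φ : ℂ × ℂ) (i : Fin 3) :
    spinorForm (mate (spinorFrenetField κ w φ)) φ i +
        spinorForm (mate φ) (spinorFrenetField κ w φ) i = -κ * (spinorForm φ φ i).re := by
  simp only [spinorFrenetField, map_add, map_smulₛₗ, mate_mate, LinearMap.add_apply,
    LinearMap.smul_apply, map_neg, LinearMap.neg_apply, Pi.add_apply, Pi.smul_apply,
    Pi.neg_apply, smul_eq_mul, spinorForm_mate_mate, re_eq_add_conj, map_mul, map_div₀, conj_I,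
    conj_ofReal, map_ofNat, RingHom.id_apply]
  ring

lemma HasDerivAt.mate {Φ : ℝ → ℂ × ℂ} {Φ' : ℂ × ℂ} {s : ℝ} (h : HasDerivAt Φ Φ' s) :
    HasDerivAt (fun t => mate (Φ t)) (mate Φ') s :=
  h.snd.star.neg.prodMk h.fst.star

lemma hasDerivAt_spinorForm {Φ Ψ : ℝ → ℂ × ℂ} {Φ' Ψ' : ℂ × ℂ} {s : ℝ}
    (hΦ : HasDerivAt Φ Φ' s) (hΨ : HasDerivAt Ψ Ψ' s) (i : Fin 3) :
    HasDerivAt (fun t => spinorForm (Φ t) (Ψ t) i)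
      (spinorForm Φ' (Ψ s) i + spinorForm (Φ s) Ψ' i) s := by
  fin_cases i
  · exact (hΦ.fst.mul hΨ.fst).sub (hΦ.snd.mul hΨ.snd) |>.congr_deriv
      (by simp [spinorForm_apply]; ring)
  · exact ((hΦ.fst.mul hΨ.fst).add (hΦ.snd.mul hΨ.snd)).const_mul I |>.congr_deriv
      (by simp [spinorForm_apply]; ring)
  · exact ((hΦ.fst.mul hΨ.snd).add (hΦ.snd.mul hΨ.fst)).neg |>.congr_deriv
      (by simp [spinorForm_apply]; ring)

/-- Here `w` plays the role of `τ - τ_G`. -/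
theorem frenet_iff_spinorFrenet {Φ Φ' : ℝ → ℂ × ℂ} (hΦ : ∀ s, HasDerivAt Φ (Φ' s) s)
    (hΦ₀ : ∀ s, Φ s ≠ 0) {T N B : ℝ → Fin 3 → ℝ}
    (hNB : ∀ s i, (N s i : ℂ) + I * B s i = spinorForm (Φ s) (Φ s) i)
    (hT : ∀ s i, (T s i : ℂ) = -spinorForm (mate (Φ s)) (Φ s) i) (κ w : ℝ → ℝ) :
    ((∀ s i, deriv (fun t => T t i) s = κ s * N s i) ∧
      (∀ s i, deriv (fun t => N t i) s = -(κ s) * T s i + w s * B s i) ∧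
      (∀ s i, deriv (fun t => B t i) s = -(w s) * N s i)) ↔
    ∀ s, Φ' s = spinorFrenetField (κ s) (w s) (Φ s) := by
  have hZ (s : ℝ) (i : Fin 3) : HasDerivAt (fun t => spinorForm (Φ t) (Φ t) i)
      (2 * spinorForm (Φ s) (Φ' s) i) s :=
    (hasDerivAt_spinorForm (hΦ s) (hΦ s) i).congr_deriv (by rw [spinorForm_comm (Φ' s)]; ring)
  have hN (i : Fin 3) : (fun t => N t i) = fun t => (spinorForm (Φ t) (Φ t) i).re :=
    funext fun t => by simpa using congrArg re (hNB t i)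
  have hB (i : Fin 3) : (fun t => B t i) = fun t => (spinorForm (Φ t) (Φ t) i).im :=
    funext fun t => by simpa using congrArg im (hNB t i)
  have hField (s : ℝ) (i : Fin 3) :
      2 * spinorForm (Φ s) (spinorFrenetField (κ s) (w s) (Φ s)) i =
        ⟨-(κ s) * T s i + w s * B s i, -(w s) * N s i⟩ := by
    rw [two_mul_spinorForm_spinorFrenetField, ← hNB, ← neg_eq_iff_eq_neg.2 (hT s i)]
    apply Complex.ext <;> simp [add_comm]
  have normal_binormal (s : ℝ) :
      ((∀ i, deriv (fun t => N t i) s = -(κ s) * T s i + w s * B s i) ∧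
        (∀ i, deriv (fun t => B t i) s = -(w s) * N s i)) ↔
      Φ' s = spinorFrenetField (κ s) (w s) (Φ s) :=
    calc _ ↔ ∀ i, 2 * spinorForm (Φ s) (Φ' s) i =
          2 * spinorForm (Φ s) (spinorFrenetField (κ s) (w s) (Φ s)) i := by
          simp only [← forall_and, hField, Complex.ext_iff, hN, hB, (hZ s _).re.deriv,
            (hZ s _).im.deriv]
      _ ↔ _ := by simp [← funext_iff, (spinorForm_injective (hΦ₀ s)).eq_iff]
  have tangent (s : ℝ) (hs : Φ' s = spinorFrenetField (κ s) (w s) (Φ s)) (i : Fin 3) :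
      deriv (fun t => T t i) s = κ s * N s i := by
    have hT' : (fun t => T t i) = fun t => -(spinorForm (mate (Φ t)) (Φ t) i).re :=
      funext fun t => by simpa using congrArg re (hT t i)
    rw [hT']
    refine ((hasDerivAt_spinorForm (hΦ s).mate (hΦ s) i).re.neg.congr_deriv ?_).deriv
    rw [hs, spinorForm_mate_spinorFrenetField, congrFun (hN i) s]
    simp
  constructor
  · rintro ⟨-, hN', hB'⟩ s
    exact (normal_binormal s).1 ⟨hN' s, hB' s⟩
  · intro hs
    exact ⟨fun s => tangent s (hs s), forall_and.1 fun s => (normal_binormal s).2 (hs s)⟩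

/-- Spinor Frenet equation in the Lie group SO(3) (τ_G = 1/2): the Frenet equations T′ = κN, N′ = −κT + (τ − 1/2)B, B′ = −(τ − 1/2)N hold iff φ′ = −i((τ − 1/2)/2)φ + (κ/2)φ̂. -/
theorem spinor_frenet_SO3 (φ₁ φ₂ : ℝ → ℂ) (κ τ : ℝ → ℝ)
    (T N B : ℝ → Fin 3 → ℝ)
    (hd₁ : Differentiable ℝ φ₁) (hd₂ : Differentiable ℝ φ₂)
    (hunit : ∀ s, (starRingEnd ℂ) (φ₁ s) * φ₁ s + (starRingEnd ℂ) (φ₂ s) * φ₂ s = 1)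
    (hNB : ∀ s i, (N s i : ℂ) + Complex.I * (B s i : ℂ) =
      ![φ₁ s ^ 2 - φ₂ s ^ 2, Complex.I * (φ₁ s ^ 2 + φ₂ s ^ 2),
        -2 * φ₁ s * φ₂ s] i)
    (hT : ∀ s i, (T s i : ℂ) =
      ![φ₁ s * (starRingEnd ℂ) (φ₂ s) + (starRingEnd ℂ) (φ₁ s) * φ₂ s,
        Complex.I * ((starRingEnd ℂ) (φ₂ s) * φ₁ s - (starRingEnd ℂ) (φ₁ s) * φ₂ s),
        ((‖φ₁ s‖ ^ 2 - ‖φ₂ s‖ ^ 2 : ℝ) : ℂ)] i) :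
    ((∀ s i, deriv (fun t => T t i) s = κ s * N s i) ∧
     (∀ s i, deriv (fun t => N t i) s = -(κ s) * T s i + (τ s - 1/2) * B s i) ∧
     (∀ s i, deriv (fun t => B t i) s = -(τ s - 1/2) * N s i)) ↔
    ((∀ s, deriv φ₁ s =
        -Complex.I * ((τ s - 1/2 : ℝ) / 2) * φ₁ s + (κ s / 2) * (-(starRingEnd ℂ) (φ₂ s))) ∧
     (∀ s, deriv φ₂ s =
        -Complex.I * ((τ s - 1/2 : ℝ) / 2) * φ₂ s + (κ s / 2) * ((starRingEnd ℂ) (φ₁ s)))) := by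
  have hΦ (s : ℝ) : HasDerivAt (fun t => (φ₁ t, φ₂ t)) (deriv φ₁ s, deriv φ₂ s) s :=
    (hd₁ s).hasDerivAt.prodMk (hd₂ s).hasDerivAt
  have hΦ₀ (s : ℝ) : (φ₁ s, φ₂ s) ≠ 0 := fun h => by
    simpa [(Prod.mk_eq_zero.1 h).1, (Prod.mk_eq_zero.1 h).2] using hunit s
  have hNB' (s : ℝ) (i : Fin 3) :
      (N s i : ℂ) + I * B s i = spinorForm (φ₁ s, φ₂ s) (φ₁ s, φ₂ s) i := by
    rw [hNB, spinorForm_self]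
  have hT' (s : ℝ) (i : Fin 3) :
      (T s i : ℂ) = -spinorForm (mate (φ₁ s, φ₂ s)) (φ₁ s, φ₂ s) i := by
    rw [hT, ← Pi.neg_apply, neg_spinorForm_mate]
  rw [frenet_iff_spinorFrenet hΦ hΦ₀ hNB' hT' κ fun s => τ s - 1 / 2, ← forall_and]
  simp [spinorFrenetField, mate_apply, Prod.ext_iff]
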